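/- Let A, B be maximally monotone on a Hilbert space H and suppose the Douglas–Rachford type iterates satisfy the recursion above with stepsizes t_n ∈ [t̲, t̄], Σ |t_n − t_{n+1}| < ∞. Then Σ_{n=1}^∞ ‖u^{n−1} − vⁿ‖² < ∞, and consequently u^{n−1} − vⁿ → 0 and aⁿ + b^{n−1} → 0 strongly as n → ∞. -/

import Mathlib

/-!
Fix `z` with `w ∈ B z` and `-w ∈ A z`. For a fixed stepsize `T`, one Douglas–Rachford step is
Fejér with respect to `‖u - z + T • (b - w)‖²`: by monotonicity of `A` and `B` it drops by at
least the squared residual `‖uⁿ - vⁿ⁺¹‖²`. Monotonicity of `B` also gives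
`t̲ ‖b - w‖ ≤ ‖u - z + T • (b - w)‖`, so passing from `tₙ₊₁` to `tₙ₊₂` multiplies the quantity
by at most `(1 + |tₙ₊₁ - tₙ₊₂| / t̲)²`. These factors have a convergent product, and a
deterministic Robbins–Siegmund argument makes the residuals square-summable.
-/

open RealInnerProductSpace Filter

def MonotoneOp {H : Type*} [NormedAddCommGroup H] [InnerProductSpace ℝ H]
    (A : H → Set H) : Prop :=
  ∀ x y u v, u ∈ A x → v ∈ A y → (0 : ℝ) ≤ ⟪u - v, x - y⟫

def MaximalMonotoneOp {H : Type*} [NormedAddCommGroup H] [InnerProductSpace ℝ H]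
    (A : H → Set H) : Prop :=
  MonotoneOp A ∧ ∀ x u, (∀ y v, v ∈ A y → (0 : ℝ) ≤ ⟪u - v, x - y⟫) → u ∈ A x

open Finset

section QuasiFejer

variable {x η δ : ℕ → ℝ}

theorem le_mul_exp_sum_of_le_one_add_mul (hx₀ : 0 ≤ x 0) (hη : ∀ n, 0 ≤ η n)
    (h : ∀ n, x (n + 1) ≤ (1 + η n) * x n) (n : ℕ) :
    x n ≤ x 0 * Real.exp (∑ i ∈ range n, η i) := by
  induction n with
  | zero => simp
  | succ n ih =>
    calc x (n + 1) ≤ (1 + η n) * x n := h n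
      _ ≤ (1 + η n) * (x 0 * Real.exp (∑ i ∈ range n, η i)) := by
        gcongr; linarith [hη n]
      _ ≤ Real.exp (η n) * (x 0 * Real.exp (∑ i ∈ range n, η i)) := by
        gcongr; linarith [Real.add_one_le_exp (η n)]
      _ = x 0 * Real.exp (∑ i ∈ range (n + 1), η i) := by
        rw [sum_range_succ, Real.exp_add]; ring

theorem summable_of_le_one_add_mul_sub (hx : ∀ n, 0 ≤ x n) (hη : ∀ n, 0 ≤ η n)
    (hη_sum : Summable η) (hδ : ∀ n, 0 ≤ δ n)
    (h : ∀ n, x (n + 1) ≤ (1 + η n) * x n - δ n) : Summable δ := by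
  set M := x 0 * Real.exp (∑' n, η n)
  have hxM : ∀ n, x n ≤ M := fun n =>
    (le_mul_exp_sum_of_le_one_add_mul (hx 0) hη (fun n => by linarith [h n, hδ n]) n).trans
      (mul_le_mul_of_nonneg_left
        (Real.exp_le_exp.2 (hη_sum.sum_le_tsum _ fun i _ => hη i)) (hx 0))
  refine summable_of_sum_range_le hδ (c := x 0 + M * ∑' n, η n) fun n => ?_
  calc ∑ i ∈ range n, δ i ≤ ∑ i ∈ range n, (x i - x (i + 1) + M * η i) :=
        sum_le_sum fun i _ => by nlinarith [h i, hxM i, hη i]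
    _ = x 0 - x n + M * ∑ i ∈ range n, η i := by
        rw [sum_add_distrib, sum_range_sub', mul_sum]
    _ ≤ x 0 + M * ∑' n, η n := by
        have hM : 0 ≤ M := (hx 0).trans (hxM 0)
        nlinarith [hx n, hη_sum.sum_le_tsum (range n) (fun i _ => hη i)]

end QuasiFejer

section InnerProductSpace

variable {H : Type*} [NormedAddCommGroup H] [InnerProductSpace ℝ H]

theorem norm_sq_add_norm_sq_le_of_inner_nonneg {x y : H} (h : 0 ≤ ⟪x, y⟫) :
    ‖x‖ ^ 2 + ‖y‖ ^ 2 ≤ ‖x + y‖ ^ 2 := by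
  rw [norm_add_sq_real]; linarith

theorem norm_le_norm_add_of_inner_nonneg {x y : H} (h : 0 ≤ ⟪x, y⟫) : ‖y‖ ≤ ‖x + y‖ :=
  (sq_le_sq₀ (norm_nonneg _) (norm_nonneg _)).1 <| by
    nlinarith [norm_sq_add_norm_sq_le_of_inner_nonneg h, sq_nonneg ‖x‖]

theorem inner_add_smul_sub_eq {p q α β : H} {T : ℝ} (h : p - q = T • (α + β)) :
    ⟪q + T • β, p - q⟫ = T * (⟪α, q⟫ + ⟪β, p⟫) := by
  obtain rfl : p = q + T • (α + β) := by rw [← h]; abel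
  simp only [add_sub_cancel_left, inner_add_left, inner_add_right, inner_smul_left,
    inner_smul_right, real_inner_comm q, RCLike.conj_to_real]
  ring

variable {A B : H → Set H} {z w u v a b : H} {T : ℝ}

theorem MonotoneOp.fejer_step (hA : MonotoneOp A) (hB : MonotoneOp B) (hzA : -w ∈ A z)
    (hzB : w ∈ B z) (ha : a ∈ A v) (hb : b ∈ B u) (hT : 0 ≤ T) (h : u - v = T • (a + b)) :
    ‖v - z + T • (b - w)‖ ^ 2 + ‖u - v‖ ^ 2 ≤ ‖u - z + T • (b - w)‖ ^ 2 := by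
  have hsub : (u - z) - (v - z) = T • ((a + w) + (b - w)) := by
    rw [sub_sub_sub_cancel_right, h]; abel_nf
  have hinner : 0 ≤ ⟪v - z + T • (b - w), (u - z) - (v - z)⟫ := by
    rw [inner_add_smul_sub_eq hsub]
    have hA' := hA v z a (-w) ha hzA
    rw [sub_neg_eq_add] at hA'
    have hB' := hB u z b w hb hzB
    exact mul_nonneg hT (add_nonneg hA' hB')
  convert norm_sq_add_norm_sq_le_of_inner_nonneg hinner using 3 <;> abel_nf

theorem MonotoneOp.mul_norm_sub_le (hB : MonotoneOp B) (hzB : w ∈ B z) (hb : b ∈ B u)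
    {c : ℝ} (hc : 0 ≤ c) (hcT : c ≤ T) : c * ‖b - w‖ ≤ ‖u - z + T • (b - w)‖ := by
  have hinner : 0 ≤ ⟪u - z, T • (b - w)⟫ := by
    rw [real_inner_smul_right, real_inner_comm]
    exact mul_nonneg (hc.trans hcT) (hB u z b w hb hzB)
  calc c * ‖b - w‖ ≤ T * ‖b - w‖ := by gcongr
    _ = ‖T • (b - w)‖ := by rw [norm_smul, Real.norm_of_nonneg (hc.trans hcT)]
    _ ≤ ‖u - z + T • (b - w)‖ := norm_le_norm_add_of_inner_nonneg hinner

theorem MonotoneOp.norm_add_smul_le (hB : MonotoneOp B) (hzB : w ∈ B z) (hb : b ∈ B u)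
    {c : ℝ} (hc : 0 < c) (hcT : c ≤ T) (T' : ℝ) :
    ‖u - z + T' • (b - w)‖ ≤ (1 + |T - T'| / c) * ‖u - z + T • (b - w)‖ := by
  have hsep := hB.mul_norm_sub_le hzB hb hc.le hcT
  calc ‖u - z + T' • (b - w)‖ = ‖u - z + T • (b - w) + (T' - T) • (b - w)‖ := by
        rw [sub_smul]; abel_nf
    _ ≤ ‖u - z + T • (b - w)‖ + |T - T'| * ‖b - w‖ := by
        grw [norm_add_le, norm_smul, Real.norm_eq_abs, abs_sub_comm]
    _ ≤ ‖u - z + T • (b - w)‖ + |T - T'| * (‖u - z + T • (b - w)‖ / c) := by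
        gcongr
        rw [le_div_iff₀ hc]; linarith
    _ = (1 + |T - T'| / c) * ‖u - z + T • (b - w)‖ := by ring

end InnerProductSpace

theorem tendsto_zero_of_summable_norm_sq {E : Type*} [SeminormedAddCommGroup E] {f : ℕ → E}
    (h : Summable fun n => ‖f n‖ ^ 2) : Tendsto f atTop (nhds 0) := by
  refine tendsto_zero_iff_norm_tendsto_zero.2 ?_
  simpa [Real.sqrt_sq (norm_nonneg _)] using h.tendsto_atTop_zero.sqrt

section DouglasRachford

variable {H : Type*} [NormedAddCommGroup H] [InnerProductSpace ℝ H]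

/-- Step `n → n + 1` uses the stepsize `t (n + 1)`; `t 0` plays no role. -/
structure IsDouglasRachfordSeq (A B : H → Set H) (t : ℕ → ℝ) (u v a b : ℕ → H) : Prop where
  b_zero_mem : b 0 ∈ B (u 0)
  a_mem (n : ℕ) : a (n + 1) ∈ A (v (n + 1))
  v_add_smul (n : ℕ) : v (n + 1) + t (n + 1) • a (n + 1) = u n - t (n + 1) • b n
  b_succ_mem (n : ℕ) : b (n + 1) ∈ B (u (n + 1))
  u_add_smul (n : ℕ) : u (n + 1) + t (n + 1) • b (n + 1) = v (n + 1) + t (n + 1) • b n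

namespace IsDouglasRachfordSeq

variable {A B : H → Set H} {t : ℕ → ℝ} {u v a b : ℕ → H} {z w : H}

theorem b_mem (h : IsDouglasRachfordSeq A B t u v a b) : ∀ n, b n ∈ B (u n)
  | 0 => h.b_zero_mem
  | n + 1 => h.b_succ_mem n

theorem sub_eq_smul (h : IsDouglasRachfordSeq A B t u v a b) (n : ℕ) :
    u n - v (n + 1) = t (n + 1) • (a (n + 1) + b n) := by
  linear_combination (norm := module) -(h.v_add_smul n)

theorem fejer_step (h : IsDouglasRachfordSeq A B t u v a b) (hA : MonotoneOp A)
    (hB : MonotoneOp B) (hzA : -w ∈ A z) (hzB : w ∈ B z) (ht : ∀ n, 0 ≤ t n) (n : ℕ) :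
    ‖u (n + 1) - z + t (n + 1) • (b (n + 1) - w)‖ ^ 2 + ‖u n - v (n + 1)‖ ^ 2 ≤
      ‖u n - z + t (n + 1) • (b n - w)‖ ^ 2 := by
  have hv : v (n + 1) - z + t (n + 1) • (b n - w) =
      u (n + 1) - z + t (n + 1) • (b (n + 1) - w) := by
    linear_combination (norm := module) -(h.u_add_smul n)
  rw [← hv]
  exact hA.fejer_step hB hzA hzB (h.a_mem n) (h.b_mem n) (ht _) (h.sub_eq_smul n)

theorem quasi_fejer (h : IsDouglasRachfordSeq A B t u v a b) (hA : MonotoneOp A)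
    (hB : MonotoneOp B) (hzA : -w ∈ A z) (hzB : w ∈ B z) {c : ℝ} (hc : 0 < c)
    (ht : ∀ n, c ≤ t n) (n : ℕ) :
    let ε := |t (n + 1) - t (n + 2)| / c
    ‖u (n + 1) - z + t (n + 2) • (b (n + 1) - w)‖ ^ 2 ≤
      (1 + ε * (2 + ε)) * ‖u n - z + t (n + 1) • (b n - w)‖ ^ 2 - ‖u n - v (n + 1)‖ ^ 2 := by
  intro ε
  have hε : 0 ≤ ε := by positivity
  have hgrow := hB.norm_add_smul_le hzB (h.b_mem (n + 1)) hc (ht (n + 1)) (t (n + 2))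
  have hfejer := h.fejer_step hA hB hzA hzB (fun n => hc.le.trans (ht n)) n
  calc _ ≤ ((1 + ε) * ‖u (n + 1) - z + t (n + 1) • (b (n + 1) - w)‖) ^ 2 := by gcongr
    _ ≤ (1 + ε) ^ 2 * (‖u n - z + t (n + 1) • (b n - w)‖ ^ 2 - ‖u n - v (n + 1)‖ ^ 2) := by
        rw [mul_pow]; gcongr; linarith
    _ ≤ _ := by
        nlinarith [mul_nonneg (mul_nonneg hε (by positivity : 0 ≤ 2 + ε))
          (sq_nonneg ‖u n - v (n + 1)‖)]

theorem summable_norm_sub_sq (h : IsDouglasRachfordSeq A B t u v a b) (hA : MonotoneOp A)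
    (hB : MonotoneOp B) (hzA : -w ∈ A z) (hzB : w ∈ B z) {c : ℝ} (hc : 0 < c)
    (ht : ∀ n, c ≤ t n) (hsum : Summable fun n => |t n - t (n + 1)|) :
    Summable fun n => ‖u n - v (n + 1)‖ ^ 2 := by
  set ε := fun n => |t (n + 1) - t (n + 2)| / c
  have hε₀ : ∀ n, 0 ≤ ε n := fun n => by positivity
  have hε : Summable ε := ((summable_nat_add_iff 1).2 hsum).div_const c
  have hη₀ : ∀ n, 0 ≤ ε n * (2 + ε n) := fun n => mul_nonneg (hε₀ n) (by linarith [hε₀ n])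
  have hη : Summable fun n => ε n * (2 + ε n) :=
    (hε.mul_right (2 + ∑' n, ε n)).of_nonneg_of_le hη₀
      fun n => by gcongr; exact hε.le_tsum n fun m _ => hε₀ m
  exact summable_of_le_one_add_mul_sub (x := fun n => ‖u n - z + t (n + 1) • (b n - w)‖ ^ 2)
    (fun n => by positivity) hη₀ hη (fun n => by positivity) (h.quasi_fejer hA hB hzA hzB hc ht)

theorem norm_add_le_norm_sub_div (h : IsDouglasRachfordSeq A B t u v a b) {c : ℝ} (hc : 0 < c)
    (ht : ∀ n, c ≤ t n) (n : ℕ) : ‖a (n + 1) + b n‖ ≤ ‖u n - v (n + 1)‖ / c := by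
  rw [le_div_iff₀ hc, h.sub_eq_smul, norm_smul, Real.norm_of_nonneg (hc.le.trans (ht _)),
    mul_comm]
  gcongr
  exact ht _

end IsDouglasRachfordSeq

end DouglasRachford

theorem nonstationary_DR_residual_summable_general
    {H : Type*} [NormedAddCommGroup H] [InnerProductSpace ℝ H]
    (A B : H → Set H) (hA : MaximalMonotoneOp A) (hB : MaximalMonotoneOp B)
    (hS : ∃ z w : H, w ∈ B z ∧ -w ∈ A z)
    (t : ℕ → ℝ) (tlo thi : ℝ) (htlo : 0 < tlo)
    (hbnd : ∀ n, tlo ≤ t n ∧ t n ≤ thi)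
    (hsum : Summable (fun n => |t n - t (n+1)|))
    (u v a b : ℕ → H)
    (hb0 : b 0 ∈ B (u 0))
    (ha : ∀ n, a (n+1) ∈ A (v (n+1)))
    (hva : ∀ n, v (n+1) + t (n+1) • a (n+1) = u n - t (n+1) • b n)
    (hb : ∀ n, b (n+1) ∈ B (u (n+1)))
    (hub : ∀ n, u (n+1) + t (n+1) • b (n+1) = v (n+1) + t (n+1) • b n) :
    Summable (fun n => ‖u n - v (n+1)‖^2) ∧
      Tendsto (fun n => u n - v (n+1)) atTop (nhds 0) ∧
      Tendsto (fun n => a (n+1) + b n) atTop (nhds 0) := by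
  obtain ⟨z, w, hzB, hzA⟩ := hS
  have hdr : IsDouglasRachfordSeq A B t u v a b := ⟨hb0, ha, hva, hb, hub⟩
  have ht : ∀ n, tlo ≤ t n := fun n => (hbnd n).1
  have hres := hdr.summable_norm_sub_sq hA.1 hB.1 hzA hzB htlo ht hsum
  have hres₀ := tendsto_zero_of_summable_norm_sq hres
  refine ⟨hres, hres₀, squeeze_zero_norm (hdr.norm_add_le_norm_sub_div htlo ht) ?_⟩
  simpa using hres₀.norm.div_const tlo

/-- Summability of `‖u^{n−1} − vⁿ‖²` and strong convergence of `u^{n−1} − vⁿ`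
and `aⁿ + b^{n−1}` to zero for the non-stationary Douglas–Rachford iterates. -/
theorem nonstationary_DR_residual_summable
    {H : Type*} [NormedAddCommGroup H] [InnerProductSpace ℝ H] [CompleteSpace H]
    (A B : H → Set H) (hA : MaximalMonotoneOp A) (hB : MaximalMonotoneOp B)
    (hS : ∃ z w : H, w ∈ B z ∧ -w ∈ A z)
    (t : ℕ → ℝ) (tlo thi : ℝ) (htlo : 0 < tlo)
    (hbnd : ∀ n, tlo ≤ t n ∧ t n ≤ thi)
    (hsum : Summable (fun n => |t n - t (n+1)|))
    (u v a b : ℕ → H)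
    (hb0 : b 0 ∈ B (u 0))
    (ha : ∀ n, a (n+1) ∈ A (v (n+1)))
    (hva : ∀ n, v (n+1) + t (n+1) • a (n+1) = u n - t (n+1) • b n)
    (hb : ∀ n, b (n+1) ∈ B (u (n+1)))
    (hub : ∀ n, u (n+1) + t (n+1) • b (n+1) = v (n+1) + t (n+1) • b n) :
    Summable (fun n => ‖u n - v (n+1)‖^2) ∧
      Tendsto (fun n => u n - v (n+1)) atTop (nhds 0) ∧
      Tendsto (fun n => a (n+1) + b n) atTop (nhds 0) :=
  nonstationary_DR_residual_summable_general A B hA hB hS t tlo thi htlo hbnd hsum u v a b hb0 ha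
    hva hb hub
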